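/- arXiv:2201.08576 — 4 statements merged into one kernel-verified Lean document; each statement's English description precedes it below -/
import Mathlib

section
/- Let p be a point sphere complex and let s₁, s₂ be isotropic vectors with ⟨s₁,s₂⟩ ≠ 0, ⟨s₁,p⟩ ≠ 0 and ⟨s₂,p⟩ ≠ 0. Set a := ⟨s₂,p⟩s₁ − ⟨s₁,p⟩s₂. Then: (i) ⟨a,p⟩ = 0 and ⟨a,a⟩ = −2⟨s₁,p⟩⟨s₂,p⟩⟨s₁,s₂⟩ ≠ 0, so σ_a is an M-Lie inversion; (ii) σ_a(s₁) = (⟨s₁,p⟩/⟨s₂,p⟩)·s₂, i.e. σ_a maps the sphere s₁ onto the sphere s₂; (iii) every x ∈ ℝ^{4,2} with ⟨x,s₁⟩ = ⟨x,s₂⟩ = 0 (a sphere in oriented contact with s₁ and s₂) is fixed: σ_a(x) = x; (iv) every x ∈ ℝ^{4,2} with ⟨x, s₁ + ⟨s₁,p⟩p⟩ = 0 and ⟨x, s₂ + ⟨s₂,p⟩p⟩ = 0 (a sphere intersecting s₁ and s₂ orthogonally) is fixed: σ_a(x) = x. -/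
noncomputable section

/-- The symmetric bilinear form of signature (4,2) on ℝ⁶, modelling ℝ^{4,2}. -/
def B (x y : Fin 6 → ℝ) : ℝ :=
  x 0 * y 0 + x 1 * y 1 + x 2 * y 2 + x 3 * y 3 - x 4 * y 4 - x 5 * y 5

/-- The Lie inversion with respect to the linear sphere complex `a`. -/
def lieInv (a x : Fin 6 → ℝ) : Fin 6 → ℝ :=
  x - (2 * B x a / B a a) • a

/-!
For isotropic `s₁, s₂` the vector `a = c s₁ - d s₂` (with `c = ⟨s₂,p⟩`, `d = ⟨s₁,p⟩`) has `⟨a,a⟩ = -2cd⟨s₁,s₂⟩` and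
`⟨s₁,a⟩ = -d⟨s₁,s₂⟩`, so `σ_a(s₁) = s₁ - a/c = (d/c) s₂`. A vector orthogonal to `a` is
fixed by `σ_a`; orthogonality to `s₁, s₂` gives this, and so does orthogonality to
`s₁ + d p, s₂ + c p`, because `a = c (s₁ + d p) - d (s₂ + c p)` as well.
-/

lemma B_comm (x y : Fin 6 → ℝ) : B x y = B y x := by
  simp only [B]; ring

lemma B_sub_right (x u v : Fin 6 → ℝ) : B x (u - v) = B x u - B x v := by
  simp only [B, Pi.sub_apply]; ring

lemma B_smul_right (x u : Fin 6 → ℝ) (c : ℝ) : B x (c • u) = c * B x u := by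
  simp only [B, Pi.smul_apply, smul_eq_mul]; ring

lemma B_sub_left (u v x : Fin 6 → ℝ) : B (u - v) x = B u x - B v x := by
  rw [B_comm, B_sub_right, B_comm x, B_comm x]

lemma B_smul_left (u x : Fin 6 → ℝ) (c : ℝ) : B (c • u) x = c * B u x := by
  rw [B_comm, B_smul_right, B_comm]

lemma B_smul_sub_smul_left (c d : ℝ) (u v x : Fin 6 → ℝ) :
    B (c • u - d • v) x = c * B u x - d * B v x := by
  rw [B_sub_left, B_smul_left, B_smul_left]

lemma B_smul_sub_smul_right (x : Fin 6 → ℝ) (c d : ℝ) (u v : Fin 6 → ℝ) :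
    B x (c • u - d • v) = c * B x u - d * B x v := by
  rw [B_comm, B_smul_sub_smul_left, B_comm u, B_comm v]

lemma B_smul_sub_smul_eq_zero (u v w : Fin 6 → ℝ) : B (B v w • u - B u w • v) w = 0 := by
  rw [B_smul_sub_smul_left]; ring

lemma B_smul_sub_smul_self {u v : Fin 6 → ℝ} (hu : B u u = 0) (hv : B v v = 0) (c d : ℝ) :
    B (c • u - d • v) (c • u - d • v) = -2 * c * d * B u v := by
  rw [B_smul_sub_smul_left, B_smul_sub_smul_right, B_smul_sub_smul_right, hu, hv, B_comm v u]
  ring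

lemma lieInv_eq_self_of_B_eq_zero {a x : Fin 6 → ℝ} (h : B x a = 0) : lieInv a x = x := by
  simp [lieInv, h]

lemma lieInv_smul_sub_smul_left {u v : Fin 6 → ℝ} (hu : B u u = 0) (hv : B v v = 0)
    (huv : B u v ≠ 0) {c d : ℝ} (hc : c ≠ 0) (hd : d ≠ 0) :
    lieInv (c • u - d • v) u = (d / c) • v := by
  have hua : B u (c • u - d • v) = -d * B u v := by rw [B_smul_sub_smul_right, hu]; ring
  have hcoeff : 2 * B u (c • u - d • v) / B (c • u - d • v) (c • u - d • v) = 1 / c := by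
    rw [hua, B_smul_sub_smul_self hu hv]
    field_simp
  rw [lieInv, hcoeff, smul_sub, smul_smul, smul_smul, one_div_mul_cancel hc, one_smul,
    sub_sub_cancel, one_div_mul_eq_div]

lemma B_smul_sub_smul_eq_zero_of_eq_zero {x u v : Fin 6 → ℝ} (hu : B x u = 0) (hv : B x v = 0)
    (c d : ℝ) : B x (c • u - d • v) = 0 := by
  rw [B_smul_sub_smul_right, hu, hv]; ring

lemma smul_add_smul_sub_smul_add_smul (c d : ℝ) (u v p : Fin 6 → ℝ) :
    c • (u + d • p) - d • (v + c • p) = c • u - d • v := by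
  rw [smul_add, smul_add, smul_smul, smul_smul, mul_comm c d]; abel

theorem stmt_1_general (p s₁ s₂ : Fin 6 → ℝ) (i₁ : B s₁ s₁ = 0) (i₂ : B s₂ s₂ = 0)
    (h12 : B s₁ s₂ ≠ 0) (h1p : B s₁ p ≠ 0) (h2p : B s₂ p ≠ 0)
    (a : Fin 6 → ℝ) (ha : a = B s₂ p • s₁ - B s₁ p • s₂) :
    B a p = 0 ∧
    B a a = -2 * B s₁ p * B s₂ p * B s₁ s₂ ∧ B a a ≠ 0 ∧
    lieInv a s₁ = (B s₁ p / B s₂ p) • s₂ ∧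
    (∀ x : Fin 6 → ℝ, B x s₁ = 0 → B x s₂ = 0 → lieInv a x = x) ∧
    (∀ x : Fin 6 → ℝ, B x (s₁ + B s₁ p • p) = 0 → B x (s₂ + B s₂ p • p) = 0 →
      lieInv a x = x) := by
  subst ha
  have haa : B (B s₂ p • s₁ - B s₁ p • s₂) (B s₂ p • s₁ - B s₁ p • s₂) =
      -2 * B s₁ p * B s₂ p * B s₁ s₂ := by
    rw [B_smul_sub_smul_self i₁ i₂]; ring
  refine ⟨B_smul_sub_smul_eq_zero s₁ s₂ p, haa, ?_,
    lieInv_smul_sub_smul_left i₁ i₂ h12 h2p h1p, ?_, ?_⟩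
  · rw [haa]
    exact mul_ne_zero (mul_ne_zero (mul_ne_zero (by norm_num) h1p) h2p) h12
  · exact fun x hx₁ hx₂ ↦
      lieInv_eq_self_of_B_eq_zero (B_smul_sub_smul_eq_zero_of_eq_zero hx₁ hx₂ _ _)
  · intro x hx₁ hx₂
    apply lieInv_eq_self_of_B_eq_zero
    rw [← smul_add_smul_sub_smul_add_smul _ _ s₁ s₂ p]
    exact B_smul_sub_smul_eq_zero_of_eq_zero hx₁ hx₂ _ _

/-- For a point sphere complex `p` and two spheres `s₁, s₂`
with `⟨s₁,s₂⟩, ⟨s₁,p⟩, ⟨s₂,p⟩ ≠ 0`, the vector `a = ⟨s₂,p⟩s₁ - ⟨s₁,p⟩s₂`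
defines an M-Lie inversion mapping `s₁` onto `s₂` and fixing every sphere in
oriented contact with, or orthogonal to, both `s₁` and `s₂`. -/
theorem stmt_1 (p s₁ s₂ : Fin 6 → ℝ) (hp : B p p = -1)
    (hs₁ : s₁ ≠ 0) (hs₂ : s₂ ≠ 0) (i₁ : B s₁ s₁ = 0) (i₂ : B s₂ s₂ = 0)
    (h12 : B s₁ s₂ ≠ 0) (h1p : B s₁ p ≠ 0) (h2p : B s₂ p ≠ 0)
    (a : Fin 6 → ℝ) (ha : a = B s₂ p • s₁ - B s₁ p • s₂) :
    B a p = 0 ∧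
    B a a = -2 * B s₁ p * B s₂ p * B s₁ s₂ ∧ B a a ≠ 0 ∧
    lieInv a s₁ = (B s₁ p / B s₂ p) • s₂ ∧
    (∀ x : Fin 6 → ℝ, B x s₁ = 0 → B x s₂ = 0 → lieInv a x = x) ∧
    (∀ x : Fin 6 → ℝ, B x (s₁ + B s₁ p • p) = 0 → B x (s₂ + B s₂ p • p) = 0 →
      lieInv a x = x) :=
  stmt_1_general p s₁ s₂ i₁ i₂ h12 h1p h2p a ha
end
end

section
/- Let p be a point sphere complex, ℝ^{4,2} = D₁ ⊕⊥ D₂ a Dupin cyclide, and γ ⊂ ℝ^{4,2} a circle (a 3-dimensional subspace orthogonal to p with induced form of signature (2,1)). For i = 1, 2 let s_{i1} ∈ D₁ and s_{i2} ∈ D₂ be nonzero isotropic vectors and m_i ∈ span{s_{i1}, s_{i2}} a nonzero point sphere (⟨m_i,p⟩ = 0) with m_i ∉ span{s_{i1}} and m_i ∉ span{s_{i2}}; assume the circle γ intersects the Dupin cyclide orthogonally at m_i, i.e. m_i ∈ γ and s_{ij} + ⟨s_{ij},p⟩p ∈ γ for j = 1, 2, and assume m₁, m₂ are linearly independent. Then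 either (a) span{s_{11},s_{12}} ∩ span{s_{21},s_{22}} ≠ {0}, so the two contact elements share a common curvature sphere s̄, which satisfies ⟨m₁,s̄⟩ = ⟨m₂,s̄⟩ = 0 — i.e. m₁ and m₂ lie on a common curvature circle; or (b) there exist nonzero point spheres m₃ ∈ span{s_{11},s_{22}} ∩ γ and m₄ ∈ span{s_{21},s_{12}} ∩ γ with m₃, m₄ ∉ span{m₁} ∪ span{m₂}, so that γ intersects the Dupin cyclide orthogonally in at least four pairwise non-proportional points and is not a 2-ortho-circle. In particular, the two intersection points of a 2-ortho-circle with a Dupin cyclide lie on a common curvature circle. -/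
noncomputable section

/-- The induced form on the subspace `W` has signature (2,1) (it admits a
spanning pseudo-orthonormal triple of Gram matrix diag(1,1,-1)); in particular
`W` is 3-dimensional. -/
def SigTwoOne (W : Submodule ℝ (Fin 6 → ℝ)) : Prop :=
  ∃ u v w : Fin 6 → ℝ, Submodule.span ℝ ({u, v, w} : Set (Fin 6 → ℝ)) = W ∧
    B u u = 1 ∧ B v v = 1 ∧ B w w = -1 ∧ B u v = 0 ∧ B u w = 0 ∧ B v w = 0

/-!
Each contact element `span {s, t}` (`s ∈ D₁`, `t ∈ D₂` isotropic) is totally isotropic, as is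
each "crossed" plane `span {s₁₁, s₂₂}`, `span {s₂₁, s₁₂}`, because `D₁ ⊥ D₂`. So a curvature sphere
shared by the two contact elements is orthogonal to `m₁` and `m₂`. Otherwise each crossed plane
contains a line orthogonal to `p`; it is spanned by a combination of the vectors `s + ⟨s, p⟩ p`,
hence lies in `γ`. Since `D₁` is nondegenerate, `D₁ ∩ D₂ = 0`, and comparing `D₁`- and
`D₂`-components shows that this point sphere is proportional to neither `m₁` nor `m₂`.
-/

section LinearAlgebra

variable {K V : Type*} [Field K] [AddCommGroup V] [Module K V]

theorem eq_and_eq_of_add_eq_add_of_disjoint {D₁ D₂ : Submodule K V} (hD : Disjoint D₁ D₂)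
    {x x' y y' : V} (hx : x ∈ D₁) (hx' : x' ∈ D₁) (hy : y ∈ D₂) (hy' : y' ∈ D₂)
    (h : x + y = x' + y') : x = x' ∧ y = y' := by
  have hsub : x - x' = y' - y := by rw [sub_eq_sub_iff_add_eq_add, h, add_comm]
  have hx0 : x - x' = 0 :=
    Submodule.disjoint_def.mp hD _ (sub_mem hx hx') (hsub ▸ sub_mem hy' hy)
  obtain rfl : x = x' := sub_eq_zero.mp hx0
  exact ⟨rfl, add_left_cancel h⟩

theorem linearIndependent_pair_of_disjoint {D₁ D₂ : Submodule K V} (hD : Disjoint D₁ D₂)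
    {x y : V} (hx : x ∈ D₁) (hy : y ∈ D₂) (hx0 : x ≠ 0) (hy0 : y ≠ 0) :
    LinearIndependent K ![x, y] := by
  refine LinearIndependent.pair_iff.mpr fun s t hst => ?_
  obtain ⟨hsx, hty⟩ := eq_and_eq_of_add_eq_add_of_disjoint hD (D₁.smul_mem s hx) D₁.zero_mem
    (D₂.smul_mem t hy) D₂.zero_mem (by rw [hst, add_zero])
  exact ⟨(smul_eq_zero.mp hsx).resolve_right hx0, (smul_eq_zero.mp hty).resolve_right hy0⟩

theorem linearIndependent_pair_of_not_mem_span_singleton {x y : V} (hx : x ≠ 0)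
    (hy : y ∉ Submodule.span K {x}) : LinearIndependent K ![x, y] :=
  (LinearIndependent.pair_iff' hx).mpr fun a ha => hy (Submodule.mem_span_singleton.mpr ⟨a, ha⟩)

theorem not_mem_span_singleton_of_mem_span_pair {D₁ D₂ : Submodule K V} (hD : Disjoint D₁ D₂)
    {x x' t t' m m' : V} (hx : x ∈ D₁) (hx' : x' ∈ D₁) (ht : t ∈ D₂) (ht' : t' ∈ D₂)
    (htt' : LinearIndependent K ![t, t']) (hm : m ∈ Submodule.span K {x, t}) (hm0 : m ≠ 0)
    (hm' : m' ∈ Submodule.span K {x', t'}) (hm'x' : m' ∉ Submodule.span K {x'}) :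
    m ∉ Submodule.span K {m'} := by
  obtain ⟨α, β, rfl⟩ := Submodule.mem_span_pair.mp hm
  obtain ⟨a, b, rfl⟩ := Submodule.mem_span_pair.mp hm'
  have hb : b ≠ 0 := by
    rintro rfl
    exact hm'x' (by simpa using Submodule.smul_mem _ a (Submodule.mem_span_singleton_self x'))
  intro hmem
  obtain ⟨k, hk⟩ := Submodule.mem_span_singleton.mp hmem
  rw [smul_add, smul_smul, smul_smul] at hk
  obtain ⟨-, hD₂⟩ := eq_and_eq_of_add_eq_add_of_disjoint hD (D₁.smul_mem _ hx')
    (D₁.smul_mem α hx) (D₂.smul_mem _ ht') (D₂.smul_mem β ht) hk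
  have hk0 : k = 0 := by
    have hkb : k * b = 0 := (htt'.eq_zero_of_pair' hD₂.symm).2
    exact (mul_eq_zero.mp hkb).resolve_right hb
  rw [hk0, zero_mul, zero_mul, zero_smul, zero_smul, add_zero] at hk
  exact hm0 hk.symm

namespace LinearMap.BilinForm

variable {β : LinearMap.BilinForm K V}

theorem IsSymm.eq_zero_of_mem_span_triple (hβ : β.IsSymm) {u v w x : V} (hu : β u u ≠ 0)
    (hv : β v v ≠ 0) (hw : β w w ≠ 0) (huv : β u v = 0) (huw : β u w = 0) (hvw : β v w = 0)
    (hx : x ∈ Submodule.span K {u, v, w}) (hux : β u x = 0) (hvx : β v x = 0)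
    (hwx : β w x = 0) : x = 0 := by
  obtain ⟨a, y, hy, rfl⟩ := Submodule.mem_span_insert.mp hx
  obtain ⟨b, c, rfl⟩ := Submodule.mem_span_pair.mp hy
  have hvu : β v u = 0 := by rw [hβ.eq]; exact huv
  have hwu : β w u = 0 := by rw [hβ.eq]; exact huw
  have hwv : β w v = 0 := by rw [hβ.eq]; exact hvw
  have ha : a = 0 := by simpa [hu, huv, huw] using hux
  have hb : b = 0 := by simpa [hv, hvu, hvw] using hvx
  have hc : c = 0 := by simpa [hw, hwu, hwv] using hwx
  simp [ha, hb, hc]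

theorem IsSymm.apply_eq_zero_of_mem_span_pair (hβ : β.IsSymm) {s t x y : V} (hs : β s s = 0)
    (ht : β t t = 0) (hst : β s t = 0) (hx : x ∈ Submodule.span K {s, t})
    (hy : y ∈ Submodule.span K {s, t}) : β x y = 0 := by
  obtain ⟨a, b, rfl⟩ := Submodule.mem_span_pair.mp hx
  obtain ⟨c, d, rfl⟩ := Submodule.mem_span_pair.mp hy
  have hts : β t s = 0 := by rw [hβ.eq]; exact hst
  simp [hs, ht, hst, hts]

theorem IsSymm.exists_isotropic_orthogonal_mem_span_pair (hβ : β.IsSymm) {p s t : V}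
    {γ : Submodule K V} (hs : β s s = 0) (ht : β t t = 0) (hst : β s t = 0)
    (hind : LinearIndependent K ![s, t]) (hsγ : s + β s p • p ∈ γ) (htγ : t + β t p • p ∈ γ) :
    ∃ m, m ≠ 0 ∧ β m m = 0 ∧ β m p = 0 ∧ m ∈ Submodule.span K {s, t} ∧ m ∈ γ := by
  obtain ⟨a, b, hab, hp⟩ : ∃ a b : K, (a ≠ 0 ∨ b ≠ 0) ∧ a * β s p + b * β t p = 0 := by
    by_cases hsp : β s p = 0
    · exact ⟨1, 0, Or.inl one_ne_zero, by simp [hsp]⟩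
    · exact ⟨β t p, -β s p, Or.inr (neg_ne_zero.mpr hsp), by ring⟩
  have hmem : a • s + b • t ∈ Submodule.span K {s, t} := Submodule.mem_span_pair.mpr ⟨a, b, rfl⟩
  refine ⟨a • s + b • t, ?_, hβ.apply_eq_zero_of_mem_span_pair hs ht hst hmem hmem,
    by simpa using hp, hmem, ?_⟩
  · intro h0
    obtain ⟨ha, hb⟩ := hind.eq_zero_of_pair h0
    exact hab.elim (· ha) (· hb)
  · have hproj : a • s + b • t = a • (s + β s p • p) + b • (t + β t p • p) := by
      linear_combination (norm := module) -hp • p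
    rw [hproj]
    exact add_mem (γ.smul_mem a hsγ) (γ.smul_mem b htγ)

theorem IsSymm.exists_isotropic_orthogonal_mem_span_pair_not_proportional (hβ : β.IsSymm)
    {D₁ D₂ : Submodule K V} (hD : Disjoint D₁ D₂) (horth : ∀ x ∈ D₁, ∀ y ∈ D₂, β x y = 0)
    {p x₁ t₁ x₂ t₂ m₁ m₂ : V} {γ : Submodule K V} (hx₁ : x₁ ∈ D₁) (ht₁ : t₁ ∈ D₂)
    (hx₂ : x₂ ∈ D₁) (ht₂ : t₂ ∈ D₂) (hx₁x₁ : β x₁ x₁ = 0) (ht₂t₂ : β t₂ t₂ = 0)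
    (hx : LinearIndependent K ![x₁, x₂]) (ht : LinearIndependent K ![t₁, t₂])
    (hm₁ : m₁ ∈ Submodule.span K {x₁, t₁}) (hm₁x₁ : m₁ ∉ Submodule.span K {x₁})
    (hm₂ : m₂ ∈ Submodule.span K {x₂, t₂}) (hm₂t₂ : m₂ ∉ Submodule.span K {t₂})
    (hx₁γ : x₁ + β x₁ p • p ∈ γ) (ht₂γ : t₂ + β t₂ p • p ∈ γ) :
    ∃ m, m ≠ 0 ∧ β m m = 0 ∧ β m p = 0 ∧ m ∈ Submodule.span K {x₁, t₂} ∧ m ∈ γ ∧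
      m ∉ Submodule.span K {m₁} ∧ m ∉ Submodule.span K {m₂} := by
  obtain ⟨m, hm0, hmm, hmp, hm, hmγ⟩ := hβ.exists_isotropic_orthogonal_mem_span_pair hx₁x₁ ht₂t₂
    (horth _ hx₁ _ ht₂)
    (linearIndependent_pair_of_disjoint hD hx₁ ht₂ (hx.ne_zero 0) (ht.ne_zero 1)) hx₁γ ht₂γ
  refine ⟨m, hm0, hmm, hmp, hm, hmγ, ?_, ?_⟩
  · exact not_mem_span_singleton_of_mem_span_pair hD hx₁ hx₁ ht₂ ht₁
      (LinearIndependent.pair_symm_iff.mp ht) hm hm0 hm₁ hm₁x₁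
  · rw [Set.pair_comm] at hm hm₂
    exact not_mem_span_singleton_of_mem_span_pair hD.symm ht₂ ht₂ hx₁ hx₂ hx hm hm0 hm₂ hm₂t₂

end LinearMap.BilinForm

end LinearAlgebra

def Bform : LinearMap.BilinForm ℝ (Fin 6 → ℝ) :=
  LinearMap.mk₂ ℝ B (fun x y z => by simp only [B, Pi.add_apply]; ring)
    (fun c x y => by simp only [B, Pi.smul_apply, smul_eq_mul]; ring)
    (fun x y z => by simp only [B, Pi.add_apply]; ring)
    (fun c x y => by simp only [B, Pi.smul_apply, smul_eq_mul]; ring)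

theorem Bform_isSymm : Bform.IsSymm :=
  LinearMap.BilinForm.isSymm_def.mpr fun x y => by
    change B x y = B y x
    simp only [B]; ring

theorem SigTwoOne.disjoint_of_orthogonal {D₁ D₂ : Submodule ℝ (Fin 6 → ℝ)} (h : SigTwoOne D₁)
    (horth : ∀ x ∈ D₁, ∀ y ∈ D₂, B x y = 0) : Disjoint D₁ D₂ := by
  obtain ⟨u, v, w, rfl, huu, hvv, hww, huv, huw, hvw⟩ := h
  refine Submodule.disjoint_def.mpr fun x hx hx₂ => ?_
  have horth' : ∀ y ∈ ({u, v, w} : Set (Fin 6 → ℝ)), Bform y x = 0 :=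
    fun y hy => horth y (Submodule.subset_span hy) x hx₂
  refine Bform_isSymm.eq_zero_of_mem_span_triple (β := Bform) ?_ ?_ ?_ huv huw hvw hx
    (horth' u (by simp)) (horth' v (by simp)) (horth' w (by simp))
  · show B u u ≠ 0
    norm_num [huu]
  · show B v v ≠ 0
    norm_num [hvv]
  · show B w w ≠ 0
    norm_num [hww]

theorem stmt_8_general (p : Fin 6 → ℝ)
    (D₁ D₂ : Submodule ℝ (Fin 6 → ℝ))
    (hsig₁ : SigTwoOne D₁)
    (horth : ∀ x ∈ D₁, ∀ y ∈ D₂, B x y = 0)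
    (γ : Submodule ℝ (Fin 6 → ℝ))
    (s₁₁ s₁₂ s₂₁ s₂₂ m₁ m₂ : Fin 6 → ℝ)
    (hs₁₁D : s₁₁ ∈ D₁) (hs₁₂D : s₁₂ ∈ D₂) (hs₂₁D : s₂₁ ∈ D₁) (hs₂₂D : s₂₂ ∈ D₂)
    (hs₁₁ : s₁₁ ≠ 0) (hs₁₂ : s₁₂ ≠ 0) (hs₂₁ : s₂₁ ≠ 0) (hs₂₂ : s₂₂ ≠ 0)
    (is₁₁ : B s₁₁ s₁₁ = 0) (is₁₂ : B s₁₂ s₁₂ = 0)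
    (is₂₁ : B s₂₁ s₂₁ = 0) (is₂₂ : B s₂₂ s₂₂ = 0)
    (hm₁mem : m₁ ∈ Submodule.span ℝ ({s₁₁, s₁₂} : Set (Fin 6 → ℝ)))
    (hm₁a : m₁ ∉ Submodule.span ℝ ({s₁₁} : Set (Fin 6 → ℝ)))
    (hm₁b : m₁ ∉ Submodule.span ℝ ({s₁₂} : Set (Fin 6 → ℝ)))
    (hm₂mem : m₂ ∈ Submodule.span ℝ ({s₂₁, s₂₂} : Set (Fin 6 → ℝ)))
    (hm₂a : m₂ ∉ Submodule.span ℝ ({s₂₁} : Set (Fin 6 → ℝ)))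
    (hm₂b : m₂ ∉ Submodule.span ℝ ({s₂₂} : Set (Fin 6 → ℝ)))
    (ho₁₁ : s₁₁ + B s₁₁ p • p ∈ γ) (ho₁₂ : s₁₂ + B s₁₂ p • p ∈ γ)
    (ho₂₁ : s₂₁ + B s₂₁ p • p ∈ γ) (ho₂₂ : s₂₂ + B s₂₂ p • p ∈ γ) :
    (∃ sc : Fin 6 → ℝ, sc ≠ 0 ∧
      sc ∈ Submodule.span ℝ ({s₁₁, s₁₂} : Set (Fin 6 → ℝ)) ∧
      sc ∈ Submodule.span ℝ ({s₂₁, s₂₂} : Set (Fin 6 → ℝ)) ∧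
      B m₁ sc = 0 ∧ B m₂ sc = 0) ∨
    (∃ m₃ m₄ : Fin 6 → ℝ,
      m₃ ≠ 0 ∧ B m₃ m₃ = 0 ∧ B m₃ p = 0 ∧
      m₃ ∈ Submodule.span ℝ ({s₁₁, s₂₂} : Set (Fin 6 → ℝ)) ∧ m₃ ∈ γ ∧
      m₄ ≠ 0 ∧ B m₄ m₄ = 0 ∧ B m₄ p = 0 ∧
      m₄ ∈ Submodule.span ℝ ({s₂₁, s₁₂} : Set (Fin 6 → ℝ)) ∧ m₄ ∈ γ ∧
      m₃ ∉ Submodule.span ℝ ({m₁} : Set (Fin 6 → ℝ)) ∧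
      m₃ ∉ Submodule.span ℝ ({m₂} : Set (Fin 6 → ℝ)) ∧
      m₄ ∉ Submodule.span ℝ ({m₁} : Set (Fin 6 → ℝ)) ∧
      m₄ ∉ Submodule.span ℝ ({m₂} : Set (Fin 6 → ℝ))) := by
  have hD : Disjoint D₁ D₂ := hsig₁.disjoint_of_orthogonal horth
  have hβ := Bform_isSymm
  have common_sphere : ∀ sc, sc ∈ Submodule.span ℝ {s₁₁, s₁₂} →
      sc ∈ Submodule.span ℝ {s₂₁, s₂₂} → B m₁ sc = 0 ∧ B m₂ sc = 0 := fun sc h₁ h₂ =>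
    ⟨hβ.apply_eq_zero_of_mem_span_pair is₁₁ is₁₂ (horth _ hs₁₁D _ hs₁₂D) hm₁mem h₁,
      hβ.apply_eq_zero_of_mem_span_pair is₂₁ is₂₂ (horth _ hs₂₁D _ hs₂₂D) hm₂mem h₂⟩
  by_cases h₁ : s₁₁ ∈ Submodule.span ℝ {s₂₁}
  · have h₁' : s₁₁ ∈ Submodule.span ℝ {s₂₁, s₂₂} := Submodule.span_mono (by simp) h₁
    exact Or.inl ⟨s₁₁, hs₁₁, Submodule.subset_span (by simp), h₁',
      common_sphere s₁₁ (Submodule.subset_span (by simp)) h₁'⟩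
  by_cases h₂ : s₁₂ ∈ Submodule.span ℝ {s₂₂}
  · have h₂' : s₁₂ ∈ Submodule.span ℝ {s₂₁, s₂₂} := Submodule.span_mono (by simp) h₂
    exact Or.inl ⟨s₁₂, hs₁₂, Submodule.subset_span (by simp), h₂',
      common_sphere s₁₂ (Submodule.subset_span (by simp)) h₂'⟩
  have i₁ : LinearIndependent ℝ ![s₁₁, s₂₁] := LinearIndependent.pair_symm_iff.mp
    (linearIndependent_pair_of_not_mem_span_singleton hs₂₁ h₁)
  have i₂ : LinearIndependent ℝ ![s₁₂, s₂₂] := LinearIndependent.pair_symm_iff.mp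
    (linearIndependent_pair_of_not_mem_span_singleton hs₂₂ h₂)
  obtain ⟨m₃, hm₃⟩ := hβ.exists_isotropic_orthogonal_mem_span_pair_not_proportional hD horth
    hs₁₁D hs₁₂D hs₂₁D hs₂₂D is₁₁ is₂₂ i₁ i₂ hm₁mem hm₁a hm₂mem hm₂b ho₁₁ ho₂₂
  obtain ⟨m₄, hm₄⟩ := hβ.exists_isotropic_orthogonal_mem_span_pair_not_proportional hD horth
    hs₂₁D hs₂₂D hs₁₁D hs₁₂D is₂₁ is₁₂ (LinearIndependent.pair_symm_iff.mp i₁)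
    (LinearIndependent.pair_symm_iff.mp i₂) hm₂mem hm₂a hm₁mem hm₁b ho₂₁ ho₁₂
  obtain ⟨hm₃0, hm₃m₃, hm₃p, hm₃mem, hm₃γ, hm₃m₁, hm₃m₂⟩ := hm₃
  obtain ⟨hm₄0, hm₄m₄, hm₄p, hm₄mem, hm₄γ, hm₄m₂, hm₄m₁⟩ := hm₄
  exact Or.inr ⟨m₃, m₄, hm₃0, hm₃m₃, hm₃p, hm₃mem, hm₃γ, hm₄0, hm₄m₄, hm₄p, hm₄mem, hm₄γ,
    hm₃m₁, hm₃m₂, hm₄m₁, hm₄m₂⟩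

/-- If a circle `γ` intersects a Dupin cyclide
`ℝ^{4,2} = D₁ ⊕⊥ D₂` orthogonally in two non-proportional points `m₁, m₂`,
then either the two contact elements share a common curvature sphere — so that
`m₁, m₂` lie on a common curvature circle — or `γ` meets the cyclide
orthogonally in further points `m₃, m₄` not proportional to `m₁` or `m₂`, and
is hence not a 2-ortho-circle. -/
theorem stmt_8 (p : Fin 6 → ℝ) (hp : B p p = -1)
    (D₁ D₂ : Submodule ℝ (Fin 6 → ℝ))
    (hsig₁ : SigTwoOne D₁) (hsig₂ : SigTwoOne D₂)
    (horth : ∀ x ∈ D₁, ∀ y ∈ D₂, B x y = 0) (hspan : D₁ ⊔ D₂ = ⊤)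
    (γ : Submodule ℝ (Fin 6 → ℝ)) (hγp : ∀ x ∈ γ, B x p = 0)
    (hγsig : SigTwoOne γ)
    (s₁₁ s₁₂ s₂₁ s₂₂ m₁ m₂ : Fin 6 → ℝ)
    (hs₁₁D : s₁₁ ∈ D₁) (hs₁₂D : s₁₂ ∈ D₂) (hs₂₁D : s₂₁ ∈ D₁) (hs₂₂D : s₂₂ ∈ D₂)
    (hs₁₁ : s₁₁ ≠ 0) (hs₁₂ : s₁₂ ≠ 0) (hs₂₁ : s₂₁ ≠ 0) (hs₂₂ : s₂₂ ≠ 0)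
    (is₁₁ : B s₁₁ s₁₁ = 0) (is₁₂ : B s₁₂ s₁₂ = 0)
    (is₂₁ : B s₂₁ s₂₁ = 0) (is₂₂ : B s₂₂ s₂₂ = 0)
    (hm₁ : m₁ ≠ 0) (im₁ : B m₁ m₁ = 0) (hm₁p : B m₁ p = 0)
    (hm₁mem : m₁ ∈ Submodule.span ℝ ({s₁₁, s₁₂} : Set (Fin 6 → ℝ)))
    (hm₁a : m₁ ∉ Submodule.span ℝ ({s₁₁} : Set (Fin 6 → ℝ)))
    (hm₁b : m₁ ∉ Submodule.span ℝ ({s₁₂} : Set (Fin 6 → ℝ)))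
    (hm₂ : m₂ ≠ 0) (im₂ : B m₂ m₂ = 0) (hm₂p : B m₂ p = 0)
    (hm₂mem : m₂ ∈ Submodule.span ℝ ({s₂₁, s₂₂} : Set (Fin 6 → ℝ)))
    (hm₂a : m₂ ∉ Submodule.span ℝ ({s₂₁} : Set (Fin 6 → ℝ)))
    (hm₂b : m₂ ∉ Submodule.span ℝ ({s₂₂} : Set (Fin 6 → ℝ)))
    (hm₁γ : m₁ ∈ γ) (hm₂γ : m₂ ∈ γ)
    (ho₁₁ : s₁₁ + B s₁₁ p • p ∈ γ) (ho₁₂ : s₁₂ + B s₁₂ p • p ∈ γ)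
    (ho₂₁ : s₂₁ + B s₂₁ p • p ∈ γ) (ho₂₂ : s₂₂ + B s₂₂ p • p ∈ γ)
    (hind : LinearIndependent ℝ ![m₁, m₂]) :
    (∃ sc : Fin 6 → ℝ, sc ≠ 0 ∧
      sc ∈ Submodule.span ℝ ({s₁₁, s₁₂} : Set (Fin 6 → ℝ)) ∧
      sc ∈ Submodule.span ℝ ({s₂₁, s₂₂} : Set (Fin 6 → ℝ)) ∧
      B m₁ sc = 0 ∧ B m₂ sc = 0) ∨
    (∃ m₃ m₄ : Fin 6 → ℝ,
      m₃ ≠ 0 ∧ B m₃ m₃ = 0 ∧ B m₃ p = 0 ∧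
      m₃ ∈ Submodule.span ℝ ({s₁₁, s₂₂} : Set (Fin 6 → ℝ)) ∧ m₃ ∈ γ ∧
      m₄ ≠ 0 ∧ B m₄ m₄ = 0 ∧ B m₄ p = 0 ∧
      m₄ ∈ Submodule.span ℝ ({s₂₁, s₁₂} : Set (Fin 6 → ℝ)) ∧ m₄ ∈ γ ∧
      m₃ ∉ Submodule.span ℝ ({m₁} : Set (Fin 6 → ℝ)) ∧
      m₃ ∉ Submodule.span ℝ ({m₂} : Set (Fin 6 → ℝ)) ∧
      m₄ ∉ Submodule.span ℝ ({m₁} : Set (Fin 6 → ℝ)) ∧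
      m₄ ∉ Submodule.span ℝ ({m₂} : Set (Fin 6 → ℝ))) :=
  stmt_8_general p D₁ D₂ hsig₁ horth γ s₁₁ s₁₂ s₂₁ s₂₂ m₁ m₂ hs₁₁D hs₁₂D hs₂₁D hs₂₂D hs₁₁ hs₁₂ hs₂₁
    hs₂₂ is₁₁ is₁₂ is₂₁ is₂₂ hm₁mem hm₁a hm₁b hm₂mem hm₂a hm₂b ho₁₁ ho₁₂ ho₂₁ ho₂₂
end
end

section
/- Let p be a point sphere complex, s̄ an isotropic vector (a curvature sphere), and q̄ an isotropic vector with ⟨q̄, s̄ + ⟨s̄,p⟩p⟩ = 0 (a sphere intersecting s̄ orthogonally, i.e. a quer-sphere along the curvature circle in which s̄ and q̄ intersect). Let m₁, m₂ be linearly independent point spheres with ⟨m_i, s̄⟩ = 0 and ⟨m_i, q̄⟩ = 0 for i = 1, 2 (two points of that curvature circle). Then the 2-ortho-circle γ := span{m₁, m₂, s̄ + ⟨s̄,p⟩p} through m₁ and m₂ orthogonal to s̄ lies on the quer-sphere q̄: ⟨q̄, x⟩ = 0 for every x ∈ γ, so in particular every point sphere of γ lies on q̄. Hence all 2-ortho-circles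 that orthogonally intersect the same curvature circle lie on a common sphere, namely the corresponding quer-sphere. -/
noncomputable section

def B.dual (q : Fin 6 → ℝ) : Module.Dual ℝ (Fin 6 → ℝ) where
  toFun := B q
  map_add' x y := by simp only [B, Pi.add_apply]; ring
  map_smul' c x := by simp only [B, Pi.smul_apply, smul_eq_mul, RingHom.id_apply]; ring

lemma B_eq_zero_of_mem_span {q x : Fin 6 → ℝ} {S : Set (Fin 6 → ℝ)}
    (hS : ∀ y ∈ S, B q y = 0) (hx : x ∈ Submodule.span ℝ S) : B q x = 0 :=
  have hker : Submodule.span ℝ S ≤ LinearMap.ker (B.dual q) :=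
    Submodule.span_le.2 fun y hy => LinearMap.mem_ker.2 (hS y hy)
  LinearMap.mem_ker.1 (hker hx)

theorem stmt_9_general (p s q m₁ m₂ : Fin 6 → ℝ)
    (horth : B q (s + B s p • p) = 0) (h₁q : B m₁ q = 0) (h₂q : B m₂ q = 0) :
    ∀ x ∈ Submodule.span ℝ ({m₁, m₂, s + B s p • p} : Set (Fin 6 → ℝ)),
      B q x = 0 := by
  have hgen : ∀ y ∈ ({m₁, m₂, s + B s p • p} : Set (Fin 6 → ℝ)), B q y = 0 := by
    rintro y (rfl | rfl | rfl)
    · rw [B_comm, h₁q]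
    · rw [B_comm, h₂q]
    · exact horth
  exact fun x hx => B_eq_zero_of_mem_span hgen hx

/-- A 2-ortho-circle `γ = span{m₁, m₂, s + ⟨s,p⟩p}` through
two points `m₁, m₂` of a curvature circle (cut out by the curvature sphere `s`
and a quer-sphere `q`) lies on the quer-sphere `q`: every element of `γ` is
orthogonal to `q`. -/
theorem stmt_9 (p s q m₁ m₂ : Fin 6 → ℝ) (hp : B p p = -1)
    (hs : s ≠ 0) (is0 : B s s = 0) (hq : q ≠ 0) (iq : B q q = 0)
    (horth : B q (s + B s p • p) = 0)
    (hm₁ : m₁ ≠ 0) (im₁ : B m₁ m₁ = 0) (hm₁p : B m₁ p = 0)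
    (hm₂ : m₂ ≠ 0) (im₂ : B m₂ m₂ = 0) (hm₂p : B m₂ p = 0)
    (hind : LinearIndependent ℝ ![m₁, m₂])
    (h₁s : B m₁ s = 0) (h₁q : B m₁ q = 0)
    (h₂s : B m₂ s = 0) (h₂q : B m₂ q = 0) :
    ∀ x ∈ Submodule.span ℝ ({m₁, m₂, s + B s p • p} : Set (Fin 6 → ℝ)),
      B q x = 0 :=
  stmt_9_general p s q m₁ m₂ horth h₁q h₂q
end
end

section
/- Let p be a point sphere complex, f^p a point sphere (isotropic, ⟨f^p,p⟩ = 0), r isotropic with ⟨f^p,r⟩ = 0, and a ∈ ℝ^{4,2} with ⟨a,a⟩ ≠ 0, ⟨r,a⟩ = 0 and ⟨f^p,a⟩ ≠ 0. Let f̂^p be a nonzero isotropic vector in span{σ_a(f^p), r} with ⟨f̂^p,p⟩ = 0 and f̂^p ∉ span{r}, and set γ := span{f^p, f̂^p, r + ⟨r,p⟩p}, the circle of the cyclic circle congruence associated to the Ribaucour pair (span{f^p,r}, σ_a(span{f^p,r})). Then every isotropic vector e ∈ span{a,p} is orthogonal to the circle γ: ⟨e, v + ⟨v,p⟩p⟩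 = 0 for every isotropic v ∈ γ^⊥. Thus, if the 2-dimensional subspace span{a,p} contains a sphere, then this sphere, regarded as a totally umbilic surface, is orthogonal to the associated cyclic circle congruence and hence belongs to the Lamé family of the Dupin cyclidic system generated by the evolution along span{a,p}. -/
/-!
Write `w = v + ⟨v,p⟩p` for the projection of `v` onto `p^⊥`. It is orthogonal to `p` and agrees with
`v` on `p^⊥`, which contains all three generators of `γ`; hence `w` is orthogonal to `p`, to `γ`,
and so to `r`. As `f̂^p ∉ span{r}`, exchange gives `σ_a(f^p) ∈ span{f̂^p, r}`, so `w` is orthogonal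
to both `f^p` and `σ_a(f^p) = f^p - (2⟨f^p,a⟩/⟨a,a⟩) a`, hence to `a`. Thus `w ⊥ span{a,p}`.
-/

noncomputable section

open Submodule
open LinearMap (ker)

namespace LinearMap.BilinForm

variable {R M : Type*} [CommRing R] [AddCommGroup M] [Module R M] {Q : LinearMap.BilinForm R M}

theorem apply_add_smul_self_eq_zero {p : M} (hp : Q p p = -1) (v : M) :
    Q (v + Q v p • p) p = 0 := by
  simp [hp]

theorem apply_add_smul_eq_of_apply_eq_zero (hQ : Q.IsSymm) {p x : M} (hx : Q x p = 0)
    (v : M) (c : R) : Q (v + c • p) x = Q v x := by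
  simp [hQ.eq p x, hx]

theorem span_insert_le_ker_add_smul (hQ : Q.IsSymm) {p v : M} {S : Set M} (hp : Q p p = -1)
    (hSp : ∀ x ∈ S, Q x p = 0) (hSv : ∀ x ∈ S, Q v x = 0) :
    span R (insert p S) ≤ ker (Q (v + Q v p • p)) := by
  rw [span_le]
  rintro x (rfl | hx)
  · exact apply_add_smul_self_eq_zero hp v
  · rw [SetLike.mem_coe, LinearMap.mem_ker, apply_add_smul_eq_of_apply_eq_zero hQ (hSp x hx)]
    exact hSv x hx

end LinearMap.BilinForm

open LinearMap.BilinForm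

def lieForm : LinearMap.BilinForm ℝ (Fin 6 → ℝ) :=
  LinearMap.mk₂ ℝ B
    (fun x y z => by simp only [B, Pi.add_apply]; ring)
    (fun c x y => by simp only [B, Pi.smul_apply, smul_eq_mul]; ring)
    (fun x y z => by simp only [B, Pi.add_apply]; ring)
    (fun c x y => by simp only [B, Pi.smul_apply, smul_eq_mul]; ring)

@[simp]
theorem lieForm_apply (x y : Fin 6 → ℝ) : lieForm x y = B x y := rfl

theorem lieForm_isSymm : lieForm.IsSymm :=
  ⟨fun x y => by simp only [lieForm_apply, B]; ring⟩

theorem B_eq_zero_of_B_lieInv_eq_zero {a x w : Fin 6 → ℝ} (ha : B a a ≠ 0) (hxa : B x a ≠ 0)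
    (hx : B w x = 0) (hσ : B w (lieInv a x) = 0) : B w a = 0 := by
  have hk : 2 * B x a / B a a ≠ 0 := div_ne_zero (mul_ne_zero two_ne_zero hxa) ha
  rw [lieInv, ← lieForm_apply, map_sub, map_smul, lieForm_apply, lieForm_apply, hx,
    smul_eq_mul, zero_sub, neg_eq_zero] at hσ
  exact (mul_eq_zero.mp hσ).resolve_left hk

theorem stmt_11_general (p fp r a : Fin 6 → ℝ) (hp : B p p = -1)
    (hfpp : B fp p = 0)
    (ha : B a a ≠ 0) (hfa : B fp a ≠ 0)
    (fq : Fin 6 → ℝ) (hfqp : B fq p = 0)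
    (hfqmem : fq ∈ Submodule.span ℝ ({lieInv a fp, r} : Set (Fin 6 → ℝ)))
    (hfqr : fq ∉ Submodule.span ℝ ({r} : Set (Fin 6 → ℝ)))
    (γ : Submodule ℝ (Fin 6 → ℝ))
    (hγ : γ = Submodule.span ℝ ({fp, fq, r + B r p • p} : Set (Fin 6 → ℝ))) :
    ∀ e ∈ Submodule.span ℝ ({a, p} : Set (Fin 6 → ℝ)), e ≠ 0 → B e e = 0 →
      ∀ v : Fin 6 → ℝ, v ≠ 0 → B v v = 0 → (∀ x ∈ γ, B v x = 0) →
        B e (v + B v p • p) = 0 := by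
  intro e he _ _ v _ _ hvγ
  set S : Set (Fin 6 → ℝ) := {fp, fq, r + B r p • p}
  have hSp : ∀ x ∈ S, lieForm x p = 0 := by
    rintro x (rfl | rfl | rfl)
    exacts [hfpp, hfqp, apply_add_smul_self_eq_zero (Q := lieForm) hp r]
  have hker : span ℝ (insert p S) ≤ ker (lieForm (v + B v p • p)) :=
    span_insert_le_ker_add_smul lieForm_isSymm hp hSp fun x hx => hvγ x (hγ ▸ subset_span hx)
  have hr : r ∈ span ℝ (insert p S) := by
    rw [show r = (r + B r p • p) - B r p • p by abel]
    exact sub_mem (subset_span (by simp [S])) (smul_mem _ _ (subset_span (by simp)))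
  have hσ : lieInv a fp ∈ span ℝ (insert p S) := by
    refine span_le.mpr ?_ (mem_span_insert_exchange hfqmem hfqr)
    rintro x (rfl | rfl)
    exacts [subset_span (by simp [S]), hr]
  have hwa := B_eq_zero_of_B_lieInv_eq_zero ha hfa (hker (subset_span (by simp [S]))) (hker hσ)
  have hw : span ℝ {a, p} ≤ ker (lieForm (v + B v p • p)) := by
    rw [span_le]
    rintro x (rfl | rfl)
    exacts [hwa, hker (subset_span (by simp))]
  rw [← lieForm_apply, lieForm_isSymm.eq]
  exact hw he

/-- With the circle `γ = span{fp, fq, r + ⟨r,p⟩p}` of the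
cyclic circle congruence associated to the Ribaucour pair `(span{fp,r},
σ_a(span{fp,r}))`: every isotropic vector `e ∈ span{a,p}` — a sphere contained
in the 2-dimensional evolution space — is orthogonal to the circle `γ`, hence
belongs, as totally umbilic surface, to the Lamé family of the generated
Dupin cyclidic system. -/
theorem stmt_11 (p fp r a : Fin 6 → ℝ) (hp : B p p = -1)
    (hfp : fp ≠ 0) (ifp : B fp fp = 0) (hfpp : B fp p = 0)
    (hr : r ≠ 0) (ir : B r r = 0) (hfr : B fp r = 0)
    (ha : B a a ≠ 0) (hra : B r a = 0) (hfa : B fp a ≠ 0)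
    (fq : Fin 6 → ℝ) (hfq : fq ≠ 0) (ifq : B fq fq = 0) (hfqp : B fq p = 0)
    (hfqmem : fq ∈ Submodule.span ℝ ({lieInv a fp, r} : Set (Fin 6 → ℝ)))
    (hfqr : fq ∉ Submodule.span ℝ ({r} : Set (Fin 6 → ℝ)))
    (γ : Submodule ℝ (Fin 6 → ℝ))
    (hγ : γ = Submodule.span ℝ ({fp, fq, r + B r p • p} : Set (Fin 6 → ℝ))) :
    ∀ e ∈ Submodule.span ℝ ({a, p} : Set (Fin 6 → ℝ)), e ≠ 0 → B e e = 0 →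
      ∀ v : Fin 6 → ℝ, v ≠ 0 → B v v = 0 → (∀ x ∈ γ, B v x = 0) →
        B e (v + B v p • p) = 0 :=
  stmt_11_general p fp r a hp hfpp ha hfa fq hfqp hfqmem hfqr γ hγ
end
end
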